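/- Let 𝔤 be the Lie algebra of a compact connected Lie group with maximal torus algebra 𝔱, positive roots Δ⁺, ρ half the sum of the positive roots, and an Ad-invariant inner product. Then (1/24) tr_𝔤(Cas) = −⟨ρ, ρ⟩, where Cas = Σ_i X_i X_i for an orthonormal basis {X_i} and tr_𝔤 is the trace in the adjoint representation. -/

import Mathlib

open LieAlgebra

namespace Kostant

structure Setup (L : Type*) [LieRing L] [LieAlgebra ℝ L] (r m : ℕ) where
  B : L →ₗ[ℝ] L →ₗ[ℝ] ℝ
  hsymm : ∀ X Y : L, B X Y = B Y X
  hpos : ∀ X : L, X ≠ 0 → 0 < B X X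
  hskew : ∀ X Y Z : L, B ⁅X, Y⁆ Z = - B Y ⁅X, Z⁆
  b : Module.Basis (Fin r ⊕ (Fin m ⊕ Fin m)) ℝ L
  hortho : ∀ i j, B (b i) (b j) = if i = j then 1 else 0
  habelian : ∀ i j : Fin r, ⁅b (Sum.inl i), b (Sum.inl j)⁆ = 0
  hmax : ∀ X : L, (∀ i : Fin r, ⁅X, b (Sum.inl i)⁆ = 0) →
      X ∈ Submodule.span ℝ (Set.range fun i : Fin r => b (Sum.inl i))
  a : Fin m → L
  ha : ∀ k, a k ∈ Submodule.span ℝ (Set.range fun i : Fin r => b (Sum.inl i))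
  hrootE : ∀ (k : Fin m) (i : Fin r),
      ⁅b (Sum.inl i), b (Sum.inr (Sum.inl k))⁆ = B (a k) (b (Sum.inl i)) • b (Sum.inr (Sum.inr k))
  hrootF : ∀ (k : Fin m) (i : Fin r),
      ⁅b (Sum.inl i), b (Sum.inr (Sum.inr k))⁆ = -(B (a k) (b (Sum.inl i))) • b (Sum.inr (Sum.inl k))
  H₀ : L
  hreg : ∀ k, 0 < B (a k) H₀

namespace Setup

variable {L : Type*} [LieRing L] [LieAlgebra ℝ L] {r m : ℕ} (S : Setup L r m)

noncomputable def e (k : Fin m) : L := S.b (Sum.inr (Sum.inl k))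

noncomputable def f (k : Fin m) : L := S.b (Sum.inr (Sum.inr k))

def t : Submodule ℝ L := Submodule.span ℝ (Set.range fun i : Fin r => S.b (Sum.inl i))

lemma H_mem (i : Fin r) : S.b (Sum.inl i) ∈ S.t :=
  Submodule.subset_span ⟨i, rfl⟩

lemma a_mem (k : Fin m) : S.a k ∈ S.t := S.ha k

lemma repr_eq (x : L) (j : Fin r ⊕ (Fin m ⊕ Fin m)) : S.b.repr x j = S.B x (S.b j) := by
  conv_rhs => rw [← S.b.sum_repr x]
  rw [map_sum, LinearMap.sum_apply]
  simp only [map_smul, LinearMap.smul_apply, S.hortho, smul_eq_mul, mul_ite, mul_one, mul_zero]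
  simp

lemma parseval (x : L) : S.B x x = ∑ j, (S.B x (S.b j)) ^ 2 := by
  calc S.B x x = S.B x (∑ j, S.b.repr x j • S.b j) := by rw [S.b.sum_repr]
    _ = ∑ j, S.b.repr x j * S.B x (S.b j) := by
        rw [map_sum]; simp [map_smul]
    _ = ∑ j, (S.B x (S.b j)) ^ 2 := by
        simp only [S.repr_eq, sq]

lemma span_orth {x : L} (hx : x ∈ S.t) (j : Fin m ⊕ Fin m) : S.B x (S.b (Sum.inr j)) = 0 := by
  induction hx using Submodule.span_induction with
  | mem y hy => obtain ⟨i, rfl⟩ := hy; simp [S.hortho]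
  | zero => simp
  | add y z _ _ hy hz => simp [map_add, hy, hz]
  | smul c y _ hy => simp [map_smul, hy]

lemma span_parseval {x : L} (hx : x ∈ S.t) :
    S.B x x = ∑ i, (S.B x (S.b (Sum.inl i))) ^ 2 := by
  rw [S.parseval x, Fintype.sum_sum_type]
  simp [S.span_orth hx]

lemma eq_zero_of_coords {x : L} (hx : x ∈ S.t)
    (h : ∀ i, S.B x (S.b (Sum.inl i)) = 0) : x = 0 := by
  by_contra hne
  have := S.hpos x hne
  rw [S.span_parseval hx] at this
  simp [h] at this

end Setup

namespace Setup

variable {L : Type*} [LieRing L] [LieAlgebra ℝ L] {r m : ℕ} (S : Setup L r m)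

def Pair (s x y : L) : Prop :=
  ∀ h ∈ S.t, ⁅h, x⁆ = S.B s h • y ∧ ⁅h, y⁆ = -(S.B s h) • x

lemma pair_ef (k : Fin m) : S.Pair (S.a k) (S.e k) (S.f k) := by
  intro h hh
  induction hh using Submodule.span_induction with
  | mem y hy =>
      obtain ⟨i, rfl⟩ := hy
      simp only [e, f]
      exact ⟨S.hrootE k i, S.hrootF k i⟩
  | zero => simp
  | add y z _ _ hy hz =>
      obtain ⟨hy1, hy2⟩ := hy; obtain ⟨hz1, hz2⟩ := hz
      constructor
      · rw [add_lie, hy1, hz1, map_add]; module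
      · rw [add_lie, hy2, hz2, map_add]; module
  | smul c y _ hy =>
      obtain ⟨hy1, hy2⟩ := hy
      constructor
      · rw [smul_lie, hy1, map_smul]; simp only [smul_eq_mul]; module
      · rw [smul_lie, hy2, map_smul]; simp only [smul_eq_mul]; module

lemma pair_neg {s x y : L} (hp : S.Pair s x y) : S.Pair (-s) x (-y) := by
  intro h hh
  obtain ⟨h1, h2⟩ := hp h hh
  constructor
  · rw [h1, map_neg, LinearMap.neg_apply]; module
  · rw [lie_neg, h2, map_neg, LinearMap.neg_apply]; module

lemma pair_mul {s s' x y x' y' : L} (hp : S.Pair s x y) (hq : S.Pair s' x' y') :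
    S.Pair (s + s') (⁅x, x'⁆ - ⁅y, y'⁆) (⁅x, y'⁆ + ⁅y, x'⁆) := by
  intro h hh
  obtain ⟨h1, h2⟩ := hp h hh
  obtain ⟨h3, h4⟩ := hq h hh
  have j1 : ⁅h, ⁅x, x'⁆⁆ = ⁅⁅h, x⁆, x'⁆ + ⁅x, ⁅h, x'⁆⁆ := (leibniz_lie h x x')
  have j2 : ⁅h, ⁅y, y'⁆⁆ = ⁅⁅h, y⁆, y'⁆ + ⁅y, ⁅h, y'⁆⁆ := (leibniz_lie h y y')
  have j3 : ⁅h, ⁅x, y'⁆⁆ = ⁅⁅h, x⁆, y'⁆ + ⁅x, ⁅h, y'⁆⁆ := (leibniz_lie h x y')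
  have j4 : ⁅h, ⁅y, x'⁆⁆ = ⁅⁅h, y⁆, x'⁆ + ⁅y, ⁅h, x'⁆⁆ := (leibniz_lie h y x')
  constructor
  · rw [lie_sub, j1, j2, h1, h2, h3, h4, map_add, LinearMap.add_apply]
    simp only [smul_lie, lie_smul, neg_smul, neg_lie, lie_neg]
    module
  · rw [lie_add, j3, j4, h1, h2, h3, h4, map_add, LinearMap.add_apply]
    simp only [smul_lie, lie_smul, neg_smul, neg_lie, lie_neg]
    module

lemma pair_orth {s s' x y x' y' : L} (hs : s ∈ S.t) (hs' : s' ∈ S.t)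
    (hp : S.Pair s x y) (hq : S.Pair s' x' y') (hne : s ≠ s') :
    S.B x x' = -(S.B y y') ∧ S.B x y' = S.B y x' := by
  have hht : s - s' ∈ S.t := Submodule.sub_mem _ hs hs'
  have hβγ : S.B s (s - s') - S.B s' (s - s') ≠ 0 := by
    have hrw : S.B s (s - s') - S.B s' (s - s') = S.B (s - s') (s - s') := by
      simp only [map_sub, LinearMap.sub_apply]; ring
    rw [hrw]
    exact ne_of_gt (S.hpos _ (sub_ne_zero.mpr hne))
  obtain ⟨h1, h2⟩ := hp (s - s') hht
  obtain ⟨h3, h4⟩ := hq (s - s') hht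
  set β := S.B s (s - s') with hβ
  set γ := S.B s' (s - s') with hγ
  have e1 : β * S.B y x' = -(γ * S.B x y') := by
    have := S.hskew (s - s') x x'
    rw [h1, h3] at this
    simpa [mul_comm] using this
  have e2 : -(β * S.B x y') = γ * S.B y x' := by
    have := S.hskew (s - s') y y'
    rw [h2, h4] at this
    simpa [mul_comm] using this
  have e3 : β * S.B y y' = γ * S.B x x' := by
    have := S.hskew (s - s') x y'
    rw [h1, h4] at this
    simpa [mul_comm] using this
  have e4 : β * S.B x x' = γ * S.B y y' := by
    have := S.hskew (s - s') y x'
    rw [h2, h3] at this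
    simpa [mul_comm] using this
  constructor
  · have key : (β - γ) * (S.B x x' + S.B y y') = 0 := by ring_nf; linarith [e3, e4]
    have := mul_eq_zero.mp key
    rcases this with h' | h'
    · exact absurd h' hβγ
    · linarith
  · have key : (β - γ) * (S.B x y' - S.B y x') = 0 := by ring_nf; linarith [e1, e2]
    rcases mul_eq_zero.mp key with h' | h'
    · exact absurd h' hβγ
    · linarith

lemma pair_orth' {s s' x y x' y' : L} (hs : s ∈ S.t) (hs' : s' ∈ S.t)
    (hp : S.Pair s x y) (hq : S.Pair s' x' y') (hne : s ≠ -s') :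
    S.B x x' = S.B y y' ∧ S.B x y' = -(S.B y x') := by
  have hq' : S.Pair (-s') x' (-y') := S.pair_neg hq
  have h := S.pair_orth hs (Submodule.neg_mem _ hs') hp hq' hne
  obtain ⟨o1, o2⟩ := h
  constructor
  · rw [map_neg] at o1; linarith [o1]
  · have : S.B x (-y') = -(S.B x y') := by rw [map_neg]
    rw [this] at o2
    linarith [o2]

end Setup


namespace Setup

variable {L : Type*} [LieRing L] [LieAlgebra ℝ L] {r m : ℕ} (S : Setup L r m)

@[simp] lemma b_e (n : Fin m) : S.b (Sum.inr (Sum.inl n)) = S.e n := rfl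
@[simp] lemma b_f (n : Fin m) : S.b (Sum.inr (Sum.inr n)) = S.f n := rfl

lemma Bee (k l : Fin m) : S.B (S.e k) (S.e l) = if k = l then 1 else 0 := by
  rw [e, e, S.hortho]; simp

lemma Bff (k l : Fin m) : S.B (S.f k) (S.f l) = if k = l then 1 else 0 := by
  rw [f, f, S.hortho]; simp

lemma Bef (k l : Fin m) : S.B (S.e k) (S.f l) = 0 := by
  rw [e, f, S.hortho]; simp

lemma Bfe (k l : Fin m) : S.B (S.f k) (S.e l) = 0 := by
  rw [f, e, S.hortho]; simp

lemma BeH (k : Fin m) (i : Fin r) : S.B (S.e k) (S.b (Sum.inl i)) = 0 := by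
  rw [e, S.hortho]; simp

lemma BfH (k : Fin m) (i : Fin r) : S.B (S.f k) (S.b (Sum.inl i)) = 0 := by
  rw [f, S.hortho]; simp

/-- cyclic invariance of the triple product -/
lemma cyc (x y z : L) : S.B ⁅x, y⁆ z = S.B ⁅y, z⁆ x := by
  have e0 : ⁅x, y⁆ = -⁅y, x⁆ := (lie_skew x y).symm
  rw [e0, map_neg, LinearMap.neg_apply, S.hskew y x z, neg_neg, S.hsymm]

lemma lieHe (i : Fin r) (k : Fin m) :
    ⁅S.b (Sum.inl i), S.e k⁆ = S.B (S.a k) (S.b (Sum.inl i)) • S.f k := S.hrootE k i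

lemma lieHf (i : Fin r) (k : Fin m) :
    ⁅S.b (Sum.inl i), S.f k⁆ = -(S.B (S.a k) (S.b (Sum.inl i))) • S.e k := S.hrootF k i

lemma ef_bracket (k : Fin m) : ⁅S.e k, S.f k⁆ = S.a k := by
  have hcent : ∀ i : Fin r, ⁅⁅S.e k, S.f k⁆, S.b (Sum.inl i)⁆ = 0 := by
    intro i
    have : ⁅⁅S.e k, S.f k⁆, S.b (Sum.inl i)⁆
        = ⁅S.e k, ⁅S.f k, S.b (Sum.inl i)⁆⁆ - ⁅S.f k, ⁅S.e k, S.b (Sum.inl i)⁆⁆ :=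
      lie_lie _ _ _
    rw [this, show ⁅S.f k, S.b (Sum.inl i)⁆ = -⁅S.b (Sum.inl i), S.f k⁆ from by
          rw [← lie_skew],
        show ⁅S.e k, S.b (Sum.inl i)⁆ = -⁅S.b (Sum.inl i), S.e k⁆ from by
          rw [← lie_skew], S.lieHe, S.lieHf]
    simp
  have hmem : ⁅S.e k, S.f k⁆ - S.a k ∈ S.t :=
    Submodule.sub_mem _ (S.hmax _ hcent) (S.ha k)
  have hco : ∀ i : Fin r, S.B (⁅S.e k, S.f k⁆ - S.a k) (S.b (Sum.inl i)) = 0 := by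
    intro i
    rw [map_sub, LinearMap.sub_apply]
    have h1 : S.B ⁅S.e k, S.f k⁆ (S.b (Sum.inl i)) = S.B (S.a k) (S.b (Sum.inl i)) := by
      rw [S.hskew, show ⁅S.e k, S.b (Sum.inl i)⁆ = -⁅S.b (Sum.inl i), S.e k⁆ from by
            rw [← lie_skew], S.lieHe]
      simp [S.Bff, S.hsymm (S.f k)]
    rw [h1]; ring
  exact sub_eq_zero.mp (S.eq_zero_of_coords hmem hco)

lemma cross (k l : Fin m) :
    S.B (S.a k) (S.a l) =
      S.B ⁅S.e k, S.e l⁆ ⁅S.f k, S.f l⁆ - S.B ⁅S.e k, S.f l⁆ ⁅S.f k, S.e l⁆ := by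
  have h1 : ⁅S.a k, S.e l⁆ = S.B (S.a l) (S.a k) • S.f l :=
    ((S.pair_ef l) (S.a k) (S.a_mem k)).1
  have h2 : S.B ⁅S.a k, S.e l⁆ (S.f l) = S.B (S.a l) (S.a k) := by
    rw [h1, map_smul, LinearMap.smul_apply, smul_eq_mul, S.Bff]
    simp
  have h3 : ⁅S.a k, S.e l⁆ = ⁅S.e k, ⁅S.f k, S.e l⁆⁆ - ⁅S.f k, ⁅S.e k, S.e l⁆⁆ := by
    rw [← S.ef_bracket k, lie_lie]
  have h4 : S.B ⁅S.e k, ⁅S.f k, S.e l⁆⁆ (S.f l) = -(S.B ⁅S.f k, S.e l⁆ ⁅S.e k, S.f l⁆) :=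
    S.hskew _ _ _
  have h5 : S.B ⁅S.f k, ⁅S.e k, S.e l⁆⁆ (S.f l) = -(S.B ⁅S.e k, S.e l⁆ ⁅S.f k, S.f l⁆) :=
    S.hskew _ _ _
  rw [h3, map_sub, LinearMap.sub_apply, h4, h5] at h2
  rw [S.hsymm (S.a k) (S.a l), S.hsymm ⁅S.e k, S.f l⁆ ⁅S.f k, S.e l⁆]
  linarith [h2]

noncomputable def Xv (k l : Fin m) : L := ⁅S.e k, S.e l⁆ - ⁅S.f k, S.f l⁆
noncomputable def Yv (k l : Fin m) : L := ⁅S.e k, S.f l⁆ + ⁅S.f k, S.e l⁆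
noncomputable def Uv (k l : Fin m) : L := ⁅S.e k, S.e l⁆ + ⁅S.f k, S.f l⁆
noncomputable def Vv (k l : Fin m) : L := ⁅S.f k, S.e l⁆ - ⁅S.e k, S.f l⁆

noncomputable def g (k l n : Fin m) : ℝ := S.B (S.Xv k l) (S.e n)
noncomputable def gh (k l n : Fin m) : ℝ := S.B (S.Xv k l) (S.f n)

lemma pair_X (k l : Fin m) : S.Pair (S.a k + S.a l) (S.Xv k l) (S.Yv k l) :=
  S.pair_mul (S.pair_ef k) (S.pair_ef l)

lemma hne_sum (k l n : Fin m) : S.a k + S.a l ≠ -(S.a n) := by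
  intro heq
  have h := congrArg (fun x => S.B x S.H₀) heq
  simp only [map_add, map_neg, LinearMap.add_apply, LinearMap.neg_apply] at h
  have h1 := S.hreg k; have h2 := S.hreg l; have h3 := S.hreg n
  linarith

lemma R1f (k l n : Fin m) : S.B (S.Yv k l) (S.f n) = S.g k l n := by
  have h := S.pair_orth' (Submodule.add_mem _ (S.a_mem k) (S.a_mem l)) (S.a_mem n)
    (S.pair_X k l) (S.pair_ef n) (S.hne_sum k l n)
  exact h.1.symm

lemma R1e (k l n : Fin m) : S.B (S.Yv k l) (S.e n) = -(S.gh k l n) := by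
  have h := S.pair_orth' (Submodule.add_mem _ (S.a_mem k) (S.a_mem l)) (S.a_mem n)
    (S.pair_X k l) (S.pair_ef n) (S.hne_sum k l n)
  rw [gh]
  linarith [h.2]

lemma lieeH (k : Fin m) (i : Fin r) :
    ⁅S.e k, S.b (Sum.inl i)⁆ = (-(S.B (S.a k) (S.b (Sum.inl i)))) • S.f k := by
  rw [show ⁅S.e k, S.b (Sum.inl i)⁆ = -⁅S.b (Sum.inl i), S.e k⁆ from (lie_skew _ _).symm,
    S.lieHe]
  module

lemma liefH (k : Fin m) (i : Fin r) :
    ⁅S.f k, S.b (Sum.inl i)⁆ = S.B (S.a k) (S.b (Sum.inl i)) • S.e k := by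
  rw [show ⁅S.f k, S.b (Sum.inl i)⁆ = -⁅S.b (Sum.inl i), S.f k⁆ from (lie_skew _ _).symm,
    S.lieHf]
  module

-- H components of the brackets of root vectors
lemma HBee (k l : Fin m) (i : Fin r) : S.B ⁅S.e k, S.e l⁆ (S.b (Sum.inl i)) = 0 := by
  rw [S.cyc, S.lieeH, map_smul, LinearMap.smul_apply, smul_eq_mul, S.Bfe]
  ring

lemma HBff (k l : Fin m) (i : Fin r) : S.B ⁅S.f k, S.f l⁆ (S.b (Sum.inl i)) = 0 := by
  rw [S.cyc, S.liefH, map_smul, LinearMap.smul_apply, smul_eq_mul, S.Bef]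
  ring

lemma HBef (k l : Fin m) (i : Fin r) :
    S.B ⁅S.e k, S.f l⁆ (S.b (Sum.inl i)) =
      if k = l then S.B (S.a k) (S.b (Sum.inl i)) else 0 := by
  rw [S.cyc, S.liefH, map_smul, LinearMap.smul_apply, smul_eq_mul, S.Bee]
  by_cases hkl : l = k
  · subst hkl; simp
  · have : ¬ k = l := fun h => hkl h.symm
    simp [hkl, this]

lemma HBfe (k l : Fin m) (i : Fin r) :
    S.B ⁅S.f k, S.e l⁆ (S.b (Sum.inl i)) =
      -(if k = l then S.B (S.a k) (S.b (Sum.inl i)) else 0) := by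
  rw [S.cyc, S.lieeH, map_smul, LinearMap.smul_apply, smul_eq_mul, S.Bff]
  by_cases hkl : l = k
  · subst hkl; simp
  · have : ¬ k = l := fun h => hkl h.symm
    simp [hkl, this]

lemma skew' (x y z : L) : S.B ⁅x, y⁆ z = -(S.B ⁅x, z⁆ y) := by
  rw [S.hskew, S.hsymm]

lemma UVef (k l n : Fin m) :
    S.B (S.Uv k l) (S.e n) = S.g l n k - S.g k n l ∧
    S.B (S.Vv k l) (S.f n) = S.g l n k + S.g k n l ∧
    S.B (S.Uv k l) (S.f n) = S.gh k n l - S.gh l n k ∧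
    S.B (S.Vv k l) (S.e n) = S.gh k n l + S.gh l n k := by
  have rf1 := S.R1f k n l
  have re1 := S.R1e k n l
  have rf2 := S.R1f l n k
  have re2 := S.R1e l n k
  simp only [Uv, Vv, Xv, Yv, g, gh, map_sub, map_add, LinearMap.sub_apply,
    LinearMap.add_apply] at rf1 re1 rf2 re2 ⊢
  refine ⟨?_, ?_, ?_, ?_⟩ <;>
    linarith [S.skew' (S.e k) (S.e l) (S.e n), S.skew' (S.f k) (S.f l) (S.e n),
      S.skew' (S.f k) (S.e l) (S.f n), S.skew' (S.e k) (S.f l) (S.f n),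
      S.skew' (S.e k) (S.e l) (S.f n), S.skew' (S.f k) (S.f l) (S.f n),
      S.skew' (S.f k) (S.e l) (S.e n), S.skew' (S.e k) (S.f l) (S.e n),
      S.cyc (S.e k) (S.e l) (S.e n), S.cyc (S.f k) (S.f l) (S.e n),
      S.cyc (S.f k) (S.e l) (S.f n), S.cyc (S.e k) (S.f l) (S.f n),
      S.cyc (S.e k) (S.e l) (S.f n), S.cyc (S.f k) (S.f l) (S.f n),
      S.cyc (S.f k) (S.e l) (S.e n), S.cyc (S.e k) (S.f l) (S.e n),
      rf1, re1, rf2, re2]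

lemma gdef (k l n : Fin m) : S.B (S.Xv k l) (S.e n) = S.g k l n := rfl
lemma ghdef (k l n : Fin m) : S.B (S.Xv k l) (S.f n) = S.gh k l n := rfl

lemma XH (k l : Fin m) (i : Fin r) : S.B (S.Xv k l) (S.b (Sum.inl i)) = 0 := by
  simp only [Xv, map_sub, LinearMap.sub_apply, S.HBee, S.HBff]; ring

lemma YH (k l : Fin m) (i : Fin r) : S.B (S.Yv k l) (S.b (Sum.inl i)) = 0 := by
  simp only [Yv, map_add, LinearMap.add_apply, S.HBef, S.HBfe]; ring

lemma UH (k l : Fin m) (i : Fin r) : S.B (S.Uv k l) (S.b (Sum.inl i)) = 0 := by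
  simp only [Uv, map_add, LinearMap.add_apply, S.HBee, S.HBff]; ring

lemma VH (k l : Fin m) (i : Fin r) :
    S.B (S.Vv k l) (S.b (Sum.inl i)) =
      -(2 * (if k = l then S.B (S.a k) (S.b (Sum.inl i)) else 0)) := by
  simp only [Vv, map_sub, LinearMap.sub_apply, S.HBef, S.HBfe]; ring

lemma p_eq (k l : Fin m) :
    S.B (S.Xv k l) (S.Xv k l) + S.B (S.Yv k l) (S.Yv k l)
      = ∑ n, 2 * ((S.g k l n) ^ 2 + (S.gh k l n) ^ 2) := by
  have hgy : ∀ n, S.B (S.Yv k l) (S.e n) = -(S.gh k l n) := fun n => S.R1e k l n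
  have hfy : ∀ n, S.B (S.Yv k l) (S.f n) = S.g k l n := fun n => S.R1f k l n
  rw [S.parseval (S.Xv k l), S.parseval (S.Yv k l)]
  simp only [Fintype.sum_sum_type, b_e, b_f, S.XH, S.YH, S.gdef, S.ghdef, hgy, hfy,
    neg_sq]
  rw [show (∑ n, 2 * ((S.g k l n) ^ 2 + (S.gh k l n) ^ 2))
      = ((∑ n, (S.g k l n) ^ 2) + (∑ n, (S.gh k l n) ^ 2))
        + ((∑ n, (S.gh k l n) ^ 2) + (∑ n, (S.g k l n) ^ 2)) from by
    rw [← Finset.sum_add_distrib, ← Finset.sum_add_distrib, ← Finset.sum_add_distrib]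
    exact Finset.sum_congr rfl fun _ _ => by ring]
  simp

lemma m_eq (k l : Fin m) :
    S.B (S.Uv k l) (S.Uv k l) + S.B (S.Vv k l) (S.Vv k l)
      = (if k = l then 4 * S.B (S.a k) (S.a k) else 0)
        + ∑ n, 2 * ((S.g k n l) ^ 2 + (S.g l n k) ^ 2
            + (S.gh k n l) ^ 2 + (S.gh l n k) ^ 2) := by
  have hu1 : ∀ n, S.B (S.Uv k l) (S.e n) = S.g l n k - S.g k n l :=
    fun n => (S.UVef k l n).1
  have hu2 : ∀ n, S.B (S.Vv k l) (S.f n) = S.g l n k + S.g k n l :=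
    fun n => (S.UVef k l n).2.1
  have hu3 : ∀ n, S.B (S.Uv k l) (S.f n) = S.gh k n l - S.gh l n k :=
    fun n => (S.UVef k l n).2.2.1
  have hu4 : ∀ n, S.B (S.Vv k l) (S.e n) = S.gh k n l + S.gh l n k :=
    fun n => (S.UVef k l n).2.2.2
  rw [S.parseval (S.Uv k l), S.parseval (S.Vv k l)]
  simp only [Fintype.sum_sum_type, b_e, b_f, S.UH, S.VH, hu1, hu2, hu3, hu4]
  rw [show (∑ n, 2 * ((S.g k n l) ^ 2 + (S.g l n k) ^ 2 + (S.gh k n l) ^ 2 + (S.gh l n k) ^ 2))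
      = ((∑ n, (S.g l n k - S.g k n l) ^ 2) + (∑ n, (S.gh k n l - S.gh l n k) ^ 2))
        + ((∑ n, (S.gh k n l + S.gh l n k) ^ 2) + (∑ n, (S.g l n k + S.g k n l) ^ 2)) from by
    rw [← Finset.sum_add_distrib, ← Finset.sum_add_distrib, ← Finset.sum_add_distrib]
    exact Finset.sum_congr rfl fun _ _ => by ring]
  have hdiag : (∑ i : Fin r, (-(2 * (if k = l then S.B (S.a k) (S.b (Sum.inl i)) else 0))) ^ 2)
      = (if k = l then 4 * S.B (S.a k) (S.a k) else 0) := by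
    by_cases hkl : k = l
    · simp only [if_pos hkl]
      rw [S.span_parseval (S.a_mem k), Finset.mul_sum]
      exact Finset.sum_congr rfl fun _ _ => by ring
    · simp [if_neg hkl]
  rw [hdiag]
  simp
  ring

end Setup

namespace Setup

variable {L : Type*} [LieRing L] [LieAlgebra ℝ L] {r m : ℕ} (S : Setup L r m)

lemma Baa_sum : ∑ k, ∑ l, S.B (S.a k) (S.a l) = S.B (∑ k, S.a k) (∑ k, S.a k) := by
  simp only [map_sum, LinearMap.sum_apply]
  exact Finset.sum_comm

lemma dadd (F G : Fin m → Fin m → ℝ) :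
    (∑ k, ∑ l, F k l) + (∑ k, ∑ l, G k l) = ∑ k, ∑ l, (F k l + G k l) := by
  rw [← Finset.sum_add_distrib]
  exact Finset.sum_congr rfl fun _ _ => Finset.sum_add_distrib.symm

lemma total : ∑ i, ∑ j, S.B ⁅S.b i, S.b j⁆ ⁅S.b i, S.b j⁆
    = 6 * S.B (∑ k, S.a k) (∑ k, S.a k) := by
  -- canonical atoms
  have hτ : ∀ k, S.B (S.a k) (S.a k) = ∑ i, (S.B (S.a k) (S.b (Sum.inl i))) ^ 2 :=
    fun k => S.span_parseval (S.a_mem k)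
  -- value lemmas for mixed blocks
  have hHe : ∀ (i : Fin r) (k : Fin m),
      S.B ⁅S.b (Sum.inl i), S.e k⁆ ⁅S.b (Sum.inl i), S.e k⁆
        = (S.B (S.a k) (S.b (Sum.inl i))) ^ 2 := by
    intro i k
    rw [S.lieHe]
    simp [map_smul, smul_eq_mul, S.Bff, sq]
  have hHf : ∀ (i : Fin r) (k : Fin m),
      S.B ⁅S.b (Sum.inl i), S.f k⁆ ⁅S.b (Sum.inl i), S.f k⁆
        = (S.B (S.a k) (S.b (Sum.inl i))) ^ 2 := by
    intro i k
    rw [S.lieHf]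
    simp [map_smul, smul_eq_mul, S.Bee, sq]
  have heH : ∀ (k : Fin m) (i : Fin r),
      S.B ⁅S.e k, S.b (Sum.inl i)⁆ ⁅S.e k, S.b (Sum.inl i)⁆
        = (S.B (S.a k) (S.b (Sum.inl i))) ^ 2 := by
    intro k i
    rw [S.lieeH]
    simp [map_smul, smul_eq_mul, S.Bff, sq]
  have hfH : ∀ (k : Fin m) (i : Fin r),
      S.B ⁅S.f k, S.b (Sum.inl i)⁆ ⁅S.f k, S.b (Sum.inl i)⁆
        = (S.B (S.a k) (S.b (Sum.inl i))) ^ 2 := by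
    intro k i
    rw [S.liefH]
    simp [map_smul, smul_eq_mul, S.Bee, sq]
  have hHH : ∀ i j : Fin r,
      S.B ⁅S.b (Sum.inl i), S.b (Sum.inl j)⁆ ⁅S.b (Sum.inl i), S.b (Sum.inl j)⁆ = 0 := by
    intro i j; rw [S.habelian]; simp
  have hmix : (∑ i : Fin r, ∑ k : Fin m, (S.B (S.a k) (S.b (Sum.inl i))) ^ 2)
      = ∑ k, S.B (S.a k) (S.a k) := by
    rw [Finset.sum_comm]
    exact Finset.sum_congr rfl fun k _ => (hτ k).symm
  have hmix2 : (∑ k : Fin m, ∑ i : Fin r, (S.B (S.a k) (S.b (Sum.inl i))) ^ 2)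
      = ∑ k, S.B (S.a k) (S.a k) :=
    Finset.sum_congr rfl fun k _ => (hτ k).symm
  -- split of the full double sum
  have hsplit : ∑ i, ∑ j, S.B ⁅S.b i, S.b j⁆ ⁅S.b i, S.b j⁆
      = 4 * (∑ k, S.B (S.a k) (S.a k))
        + ((∑ k, ∑ l, S.B ⁅S.e k, S.e l⁆ ⁅S.e k, S.e l⁆)
          + (∑ k, ∑ l, S.B ⁅S.e k, S.f l⁆ ⁅S.e k, S.f l⁆)
          + (∑ k, ∑ l, S.B ⁅S.f k, S.e l⁆ ⁅S.f k, S.e l⁆)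
          + (∑ k, ∑ l, S.B ⁅S.f k, S.f l⁆ ⁅S.f k, S.f l⁆)) := by
    simp only [Fintype.sum_sum_type, b_e, b_f, Finset.sum_add_distrib,
      hHH, hHe, hHf, heH, hfH, Finset.sum_const_zero]
    rw [hmix, hmix2]
    ring
  have dsub : ∀ (F G : Fin m → Fin m → ℝ),
      (∑ k, ∑ l, F k l) - (∑ k, ∑ l, G k l) = ∑ k, ∑ l, (F k l - G k l) := by
    intro F G
    rw [← Finset.sum_sub_distrib]
    exact Finset.sum_congr rfl fun _ _ => by rw [Finset.sum_sub_distrib]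
  have hkey1 : (∑ k, ∑ l, S.B (S.Xv k l) (S.Xv k l)) + (∑ k, ∑ l, S.B (S.Yv k l) (S.Yv k l))
      + ((∑ k, ∑ l, S.B (S.Uv k l) (S.Uv k l)) + (∑ k, ∑ l, S.B (S.Vv k l) (S.Vv k l)))
      = 2 * ((∑ k, ∑ l, S.B ⁅S.e k, S.e l⁆ ⁅S.e k, S.e l⁆)
          + (∑ k, ∑ l, S.B ⁅S.e k, S.f l⁆ ⁅S.e k, S.f l⁆)
          + (∑ k, ∑ l, S.B ⁅S.f k, S.e l⁆ ⁅S.f k, S.e l⁆)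
          + (∑ k, ∑ l, S.B ⁅S.f k, S.f l⁆ ⁅S.f k, S.f l⁆)) := by
    rw [dadd, dadd, dadd]
    conv_rhs => rw [dadd, dadd, dadd]
    simp only [Finset.mul_sum]
    refine Finset.sum_congr rfl fun k _ => Finset.sum_congr rfl fun l _ => ?_
    simp only [Xv, Yv, Uv, Vv, map_sub, map_add, LinearMap.sub_apply, LinearMap.add_apply]
    ring
  have hkey2 : (∑ k, ∑ l, S.B (S.Uv k l) (S.Uv k l)) + (∑ k, ∑ l, S.B (S.Vv k l) (S.Vv k l))
      - ((∑ k, ∑ l, S.B (S.Xv k l) (S.Xv k l)) + (∑ k, ∑ l, S.B (S.Yv k l) (S.Yv k l)))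
      = 4 * S.B (∑ k, S.a k) (∑ k, S.a k) := by
    rw [dadd, dadd, dsub, ← S.Baa_sum]
    simp only [Finset.mul_sum]
    refine Finset.sum_congr rfl fun k _ => Finset.sum_congr rfl fun l _ => ?_
    have hc := S.cross k l
    have hs1 := S.hsymm ⁅S.f k, S.f l⁆ ⁅S.e k, S.e l⁆
    have hs2 := S.hsymm ⁅S.f k, S.e l⁆ ⁅S.e k, S.f l⁆
    simp only [Xv, Yv, Uv, Vv, map_sub, map_add, LinearMap.sub_apply, LinearMap.add_apply]
    linarith
  have tmul : ∀ (c : ℝ) (F : Fin m → Fin m → Fin m → ℝ),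
      (∑ k, ∑ l, ∑ n, c * F k l n) = c * ∑ k, ∑ l, ∑ n, F k l n := by
    intro c F; simp [Finset.mul_sum]
  have tadd : ∀ (F G : Fin m → Fin m → Fin m → ℝ),
      (∑ k, ∑ l, ∑ n, (F k l n + G k l n))
        = (∑ k, ∑ l, ∑ n, F k l n) + (∑ k, ∑ l, ∑ n, G k l n) := by
    intro F G; simp [Finset.sum_add_distrib]
  have hP : (∑ k, ∑ l, S.B (S.Xv k l) (S.Xv k l)) + (∑ k, ∑ l, S.B (S.Yv k l) (S.Yv k l))
      = 2 * (∑ k, ∑ l, ∑ n, (S.g k l n) ^ 2) + 2 * (∑ k, ∑ l, ∑ n, (S.gh k l n) ^ 2) := by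
    rw [dadd]
    have step1 : ∀ k l, S.B (S.Xv k l) (S.Xv k l) + S.B (S.Yv k l) (S.Yv k l)
        = ∑ n, (2 * (S.g k l n) ^ 2 + 2 * (S.gh k l n) ^ 2) := fun k l =>
      (S.p_eq k l).trans (Finset.sum_congr rfl fun n _ => by ring)
    rw [Finset.sum_congr rfl fun k _ => Finset.sum_congr rfl fun l _ => step1 k l]
    simp only [Finset.sum_add_distrib]
    rw [tmul, tmul]
  have hM : (∑ k, ∑ l, S.B (S.Uv k l) (S.Uv k l)) + (∑ k, ∑ l, S.B (S.Vv k l) (S.Vv k l))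
      = 4 * (∑ k, S.B (S.a k) (S.a k))
        + (4 * (∑ k, ∑ l, ∑ n, (S.g k l n) ^ 2) + 4 * (∑ k, ∑ l, ∑ n, (S.gh k l n) ^ 2)) := by
    rw [dadd]
    have step1 : ∀ k l, S.B (S.Uv k l) (S.Uv k l) + S.B (S.Vv k l) (S.Vv k l)
        = (if k = l then 4 * S.B (S.a k) (S.a k) else 0)
          + ∑ n, (2 * (S.g k n l) ^ 2 + 2 * (S.g l n k) ^ 2
              + 2 * (S.gh k n l) ^ 2 + 2 * (S.gh l n k) ^ 2) := fun k l =>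
      (S.m_eq k l).trans (by
        refine congrArg _ (Finset.sum_congr rfl fun n _ => by ring))
    rw [Finset.sum_congr rfl fun k _ => Finset.sum_congr rfl fun l _ => step1 k l]
    simp only [Finset.sum_add_distrib]
    have hite : (∑ k, ∑ l, (if k = l then 4 * S.B (S.a k) (S.a k) else 0))
        = 4 * ∑ k, S.B (S.a k) (S.a k) := by
      rw [Finset.mul_sum]
      exact Finset.sum_congr rfl fun k _ => by
        rw [Finset.sum_ite_eq]
        simp
    have t1 : (∑ k, ∑ l, ∑ n, 2 * (S.g k n l) ^ 2)
        = 2 * ∑ k, ∑ l, ∑ n, (S.g k l n) ^ 2 := by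
      rw [tmul]
      exact congrArg _ (Finset.sum_congr rfl fun k _ => Finset.sum_comm)
    have t2 : (∑ k, ∑ l, ∑ n, 2 * (S.g l n k) ^ 2)
        = 2 * ∑ k, ∑ l, ∑ n, (S.g k l n) ^ 2 := by
      rw [tmul]
      refine congrArg _ ?_
      calc (∑ k, ∑ l, ∑ n, (S.g l n k) ^ 2)
          = ∑ l, ∑ k, ∑ n, (S.g l n k) ^ 2 := Finset.sum_comm
        _ = ∑ l, ∑ n, ∑ k, (S.g l n k) ^ 2 :=
            Finset.sum_congr rfl fun _ _ => Finset.sum_comm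
    have t3 : (∑ k, ∑ l, ∑ n, 2 * (S.gh k n l) ^ 2)
        = 2 * ∑ k, ∑ l, ∑ n, (S.gh k l n) ^ 2 := by
      rw [tmul]
      exact congrArg _ (Finset.sum_congr rfl fun k _ => Finset.sum_comm)
    have t4 : (∑ k, ∑ l, ∑ n, 2 * (S.gh l n k) ^ 2)
        = 2 * ∑ k, ∑ l, ∑ n, (S.gh k l n) ^ 2 := by
      rw [tmul]
      refine congrArg _ ?_
      calc (∑ k, ∑ l, ∑ n, (S.gh l n k) ^ 2)
          = ∑ l, ∑ k, ∑ n, (S.gh l n k) ^ 2 := Finset.sum_comm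
        _ = ∑ l, ∑ n, ∑ k, (S.gh l n k) ^ 2 :=
            Finset.sum_congr rfl fun _ _ => Finset.sum_comm
    rw [hite, t1, t2, t3, t4]
    ring
  linarith [hsplit, hkey1, hkey2, hP, hM]

end Setup

end Kostant

open Kostant

/-- Kostant's identity: Let `𝔤` be the Lie algebra of a compact connected Lie
group with an Ad-invariant inner product `B` (each `ad X` skew-symmetric).  Fix an
orthonormal basis adapted to the root space decomposition: vectors `H_i` (`i : Fin r`)
spanning a maximal abelian subalgebra `𝔱`, and for each positive root (represented via the
inner product by a vector `a k ∈ 𝔱`, positivity witnessed by a regular element `H₀`) a pair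
`E_k, F_k` with `[H, E_k] = ⟨a k, H⟩ F_k` and `[H, F_k] = −⟨a k, H⟩ E_k`.  With
`ρ = (1/2) Σ_k a k` (half the sum of the positive roots) and `Cas = Σ_i X_i X_i`,
one has `(1/24) tr_𝔤(Cas) = −⟨ρ, ρ⟩`. -/
theorem kostant_trace_casimir_eq_neg_norm_rho_sq
    {L : Type*} [LieRing L] [LieAlgebra ℝ L] [Module.Finite ℝ L]
    (B : L →ₗ[ℝ] L →ₗ[ℝ] ℝ)
    (hsymm : ∀ X Y : L, B X Y = B Y X)
    (hpos : ∀ X : L, X ≠ 0 → 0 < B X X)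
    (hskew : ∀ X Y Z : L, B ⁅X, Y⁆ Z = - B Y ⁅X, Z⁆)
    {r m : ℕ}
    (b : Module.Basis (Fin r ⊕ (Fin m ⊕ Fin m)) ℝ L)
    (hortho : ∀ i j, B (b i) (b j) = if i = j then 1 else 0)
    (habelian : ∀ i j : Fin r, ⁅b (Sum.inl i), b (Sum.inl j)⁆ = 0)
    (hmax : ∀ X : L, (∀ i : Fin r, ⁅X, b (Sum.inl i)⁆ = 0) →
      X ∈ Submodule.span ℝ (Set.range fun i : Fin r => b (Sum.inl i)))
    (a : Fin m → L)
    (ha : ∀ k, a k ∈ Submodule.span ℝ (Set.range fun i : Fin r => b (Sum.inl i)))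
    (hrootE : ∀ (k : Fin m) (i : Fin r),
      ⁅b (Sum.inl i), b (Sum.inr (Sum.inl k))⁆ = B (a k) (b (Sum.inl i)) • b (Sum.inr (Sum.inr k)))
    (hrootF : ∀ (k : Fin m) (i : Fin r),
      ⁅b (Sum.inl i), b (Sum.inr (Sum.inr k))⁆ = -(B (a k) (b (Sum.inl i))) • b (Sum.inr (Sum.inl k)))
    (hreg : ∃ H₀ : L, ∀ k, 0 < B (a k) H₀)
    (ρ : L) (hρ : ρ = (1 / 2 : ℝ) • ∑ k, a k) :
    (1 / 24 : ℝ) * ∑ i, LinearMap.trace ℝ L (ad ℝ L (b i) * ad ℝ L (b i)) = - B ρ ρ := by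
  obtain ⟨H₀, hH₀⟩ := hreg
  let S : Setup L r m :=
    { B := B, hsymm := hsymm, hpos := hpos, hskew := hskew, b := b, hortho := hortho,
      habelian := habelian, hmax := hmax, a := a, ha := ha, hrootE := hrootE,
      hrootF := hrootF, H₀ := H₀, hreg := hH₀ }
  have htr : ∀ x : L, LinearMap.trace ℝ L (ad ℝ L x * ad ℝ L x)
      = ∑ j, B ⁅x, ⁅x, b j⁆⁆ (b j) := by
    intro x
    rw [LinearMap.trace_eq_matrix_trace ℝ b]
    rw [Matrix.trace]
    refine Finset.sum_congr rfl fun j _ => ?_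
    rw [Matrix.diag_apply, LinearMap.toMatrix_apply, Module.End.mul_apply, ad_apply, ad_apply]
    exact S.repr_eq _ j
  have h1 : ∑ i, LinearMap.trace ℝ L (ad ℝ L (b i) * ad ℝ L (b i))
      = -(6 * B (∑ k, a k) (∑ k, a k)) := by
    calc ∑ i, LinearMap.trace ℝ L (ad ℝ L (b i) * ad ℝ L (b i))
        = ∑ i, ∑ j, B ⁅b i, ⁅b i, b j⁆⁆ (b j) :=
          Finset.sum_congr rfl fun i _ => htr (b i)
      _ = ∑ i, ∑ j, -(B ⁅b i, b j⁆ ⁅b i, b j⁆) :=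
          Finset.sum_congr rfl fun i _ => Finset.sum_congr rfl fun j _ =>
            hskew (b i) ⁅b i, b j⁆ (b j)
      _ = -(∑ i, ∑ j, B ⁅b i, b j⁆ ⁅b i, b j⁆) := by
          simp only [← Finset.sum_neg_distrib]
      _ = -(6 * B (∑ k, a k) (∑ k, a k)) := by
          exact congrArg Neg.neg S.total
  rw [h1, hρ]
  simp only [map_smul, LinearMap.smul_apply, smul_eq_mul]
  ring
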